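/- Let G be a finite simple graph with arboricity at most α, let 0 < ε ≤ 1, set Δ = 5(5/ε + 1)·2α, and let G_Δ be the bounded-degree matching sparsifier (each vertex marks up to Δ incident edges, vertices of degree < Δ mark all, and G_Δ keeps edges marked by both endpoints). If M is an η-maximal matching of G_Δ (at most η·|M| edges of G_Δ can be added to M while keeping it a matching of G_Δ), then M is an (ε + 3η)-maximal matching of G: at most (ε + 3η)·|M| edges of G can be added to M while keeping it a matching of G. -/

import Mathlib

open Finset SimpleGraph

/-- `N` is a matching using only edges from the edge set `s`:
its members lie in `s` and are pairwise vertex-disjoint. -/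
def IsMatchingIn {V : Type*} (s : Set (Sym2 V)) (N : Finset (Sym2 V)) : Prop :=
  (↑N : Set (Sym2 V)) ⊆ s ∧
    ∀ e ∈ N, ∀ f ∈ N, e ≠ f → ∀ v : V, v ∈ e → v ∉ f

/-!
Split the new edges `Mm' \ Mm` into those of `G_Δ` and the rest. The former extend `Mm` inside
`G_Δ`, so there are at most `η |Mm|` of them. Each of the latter has a free endpoint that did not
mark it, hence of degree at least `Δ`, and these endpoints are distinct; so it remains to bound the
set `X` of free vertices of degree at least `Δ`.

Take a maximal matching `N` among the `G_Δ`-edges joining `X` to free vertices of degree below `Δ`.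
It extends `Mm`, so `|N| ≤ η |Mm|`, and it covers at most `|N|` vertices of `X`. An uncovered
`x ∈ X` marks `Δ` edges, all ending in `X ∪ V(N) ∪ V(Mm)`: a free low-degree neighbour marks every
edge, so maximality of `N` puts it in `V(N)`. Double counting these marks against the arboricity
bound gives `Δ |X \ V(N)| ≤ 2α (|X \ V(N)| + 2|N| + 2|Mm|)`, hence `|X \ V(N)| ≤ (ε + η) |Mm|` by
the choice of `Δ`.
-/

section

variable {V : Type*}

theorem Sym2.card_toFinset_le_two [DecidableEq V] (z : Sym2 V) : #z.toFinset ≤ 2 := by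
  rw [Sym2.card_toFinset]
  split_ifs <;> omega

def verts [DecidableEq V] (N : Finset (Sym2 V)) : Finset V := N.biUnion Sym2.toFinset

section Verts

variable [DecidableEq V] {N : Finset (Sym2 V)} {v : V}

@[simp]
theorem mem_verts : v ∈ verts N ↔ ∃ e ∈ N, v ∈ e := by
  simp [verts]

theorem card_verts_le (N : Finset (Sym2 V)) : #(verts N) ≤ 2 * #N := by
  calc #(verts N) ≤ ∑ e ∈ N, #e.toFinset := card_biUnion_le
    _ ≤ ∑ _e ∈ N, 2 := sum_le_sum fun e _ => e.card_toFinset_le_two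
    _ = 2 * #N := by rw [sum_const, smul_eq_mul, mul_comm]

theorem card_inter_verts_le {T : Finset V}
    (hN : ∀ e ∈ N, ∀ v ∈ T, ∀ w ∈ T, v ∈ e → w ∈ e → v = w) : #(T ∩ verts N) ≤ #N :=
  card_le_card_of_forall_subsingleton (fun v e => v ∈ e)
    (fun v hv => by simpa using (mem_inter.mp hv).2)
    fun e he v hv w hw => hN e he v (mem_inter.mp hv.1).1 w (mem_inter.mp hw.1).1 hv.2 hw.2

end Verts

namespace IsMatchingIn

variable {s t : Set (Sym2 V)} {N N' : Finset (Sym2 V)}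

theorem of_subset (h : IsMatchingIn s N) (hN' : N' ⊆ N) (ht : (↑N' : Set (Sym2 V)) ⊆ t) :
    IsMatchingIn t N' :=
  ⟨ht, fun e he f hf => h.2 e (hN' he) f (hN' hf)⟩

theorem union [DecidableEq V] (hN : IsMatchingIn s N) (hN' : IsMatchingIn s N')
    (hdisj : ∀ e ∈ N, ∀ f ∈ N', ∀ v ∈ e, v ∉ f) : IsMatchingIn s (N ∪ N') := by
  refine ⟨by simpa [Set.union_subset_iff] using ⟨hN.1, hN'.1⟩, ?_⟩
  intro e he f hf hne v hve hvf
  rcases mem_union.mp he with he | he <;> rcases mem_union.mp hf with hf | hf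
  · exact hN.2 e he f hf hne v hve hvf
  · exact hdisj e he f hf v hve hvf
  · exact hdisj f hf e he v hvf hve
  · exact hN'.2 e he f hf hne v hve hvf

theorem card_le_card_of_forall_exists_mem [DecidableEq V] (hN : IsMatchingIn s N) {T : Finset V}
    (hT : ∀ e ∈ N, ∃ v ∈ T, v ∈ e) : #N ≤ #T :=
  card_le_card_of_forall_subsingleton (fun e v => v ∈ e) hT
    fun v _ e he f hf => by_contra fun hne => hN.2 e he.1 f hf.1 hne v he.2 hf.2

theorem notMem_verts_of_mem_sdiff [DecidableEq V] (hN : IsMatchingIn s N) (hsub : N' ⊆ N)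
    {e : Sym2 V} (he : e ∈ N \ N') {v : V} (hv : v ∈ e) : v ∉ verts N' := by
  rw [mem_verts]
  rintro ⟨f, hf, hvf⟩
  exact hN.2 e (mem_sdiff.mp he).1 f (hsub hf) (fun h => (mem_sdiff.mp he).2 (h ▸ hf)) v hv hvf

theorem exists_maximal (A : Finset (Sym2 V)) :
    ∃ N, IsMatchingIn ↑A N ∧ ∀ e ∈ A, ∃ f ∈ N, ∃ v ∈ e, v ∈ f := by
  classical
  obtain ⟨N, hN⟩ := (A.powerset.filter (IsMatchingIn ↑A)).exists_maximal
    ⟨∅, by simp [IsMatchingIn]⟩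
  have hNA : IsMatchingIn ↑A N := (mem_filter.mp hN.1).2
  refine ⟨N, hNA, fun e he => ?_⟩
  by_contra! hfree
  have hins : IsMatchingIn ↑A ({e} ∪ N) :=
    IsMatchingIn.union ⟨by simpa using he, by simp⟩ hNA fun e' he' f hf v hv => by
      rw [mem_singleton.mp he'] at hv
      exact hfree f hf v hv
  have heN : e ∈ N := hN.2 (mem_filter.mpr ⟨mem_powerset.mpr (coe_subset.mp hins.1), hins⟩)
    subset_union_right (mem_union_left _ (mem_singleton_self e))
  exact hfree e heN e.out.1 (Sym2.out_fst_mem e) (Sym2.out_fst_mem e)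

theorem card_le_of_disjoint_verts [DecidableEq V] {η : ℝ} (hN : IsMatchingIn s N)
    (hηmax : ∀ L : Finset (Sym2 V), IsMatchingIn s L → N ⊆ L → (#(L \ N) : ℝ) ≤ η * #N)
    (hN' : IsMatchingIn s N') (hfree : ∀ e ∈ N', ∀ v ∈ e, v ∉ verts N) :
    (#N' : ℝ) ≤ η * #N := by
  have hdisj : ∀ e ∈ N, ∀ f ∈ N', ∀ v ∈ e, v ∉ f :=
    fun e he f hf v hve hvf => hfree f hf v hvf (mem_verts.mpr ⟨e, he, hve⟩)
  have hsdiff : (N ∪ N') \ N = N' := by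
    rw [union_sdiff_left, Finset.sdiff_eq_self_iff_disjoint]
    exact disjoint_left.mpr fun e he heN =>
      hdisj e heN e he e.out.1 (Sym2.out_fst_mem e) (Sym2.out_fst_mem e)
  simpa [hsdiff] using hηmax _ (hN.union hN' hdisj) subset_union_left

end IsMatchingIn

theorem card_mul_le_card_mul_two_of_marks [DecidableEq V] {T : Finset V} {E : Finset (Sym2 V)}
    {M : V → Finset (Sym2 V)} {Δ : ℕ} (hME : ∀ x ∈ T, M x ⊆ E) (hΔ : ∀ x ∈ T, Δ ≤ #(M x))
    (hmem : ∀ x ∈ T, ∀ e ∈ M x, x ∈ e) : #T * Δ ≤ #E * 2 := by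
  refine card_mul_le_card_mul (fun x e => e ∈ M x) (fun x hx => ?_) fun e _ => ?_
  · rw [bipartiteAbove, filter_mem_eq_inter, inter_eq_right.mpr (hME x hx)]
    exact hΔ x hx
  · refine (card_le_card fun x hx => ?_).trans e.card_toFinset_le_two
    rw [mem_bipartiteBelow] at hx
    exact Sym2.mem_toFinset.mpr (hmem x hx.1 e hx.2)

namespace SimpleGraph

variable [Fintype V] [DecidableEq V] (G : SimpleGraph V) [DecidableRel G.Adj]

def edgesWithin (S : Finset V) : Finset (Sym2 V) :=
  G.edgeFinset.filter fun e => ∀ v ∈ e, v ∈ S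

theorem card_edgesWithin_le {α : ℝ} (hα : 0 ≤ α)
    (harb : ∀ S : Finset V, 2 ≤ #S → (#(G.edgesWithin S) : ℝ) ≤ α * (#S - 1))
    (S : Finset V) : (#(G.edgesWithin S) : ℝ) ≤ α * #S := by
  by_cases hS : 2 ≤ #S
  · linarith [harb S hS]
  · suffices G.edgesWithin S = ∅ by rw [this, card_empty, Nat.cast_zero]; positivity
    refine eq_empty_iff_forall_notMem.mpr fun e he => hS ?_
    rw [edgesWithin, mem_filter, mem_edgeFinset] at he
    induction e using Sym2.ind with
    | _ a b =>
      exact one_lt_card.mpr ⟨a, he.2 a (Sym2.mem_mk_left a b), b, he.2 b (Sym2.mem_mk_right a b),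
        G.ne_of_adj he.1⟩

end SimpleGraph

section Sparsifier

variable [Fintype V] [DecidableEq V] {G : SimpleGraph V} [DecidableRel G.Adj]
  {M : V → Finset (Sym2 V)} {Δ : ℕ} {Mm N : Finset (Sym2 V)}

/-- The edge set of `G_Δ`. -/
def sparsifier (G : SimpleGraph V) (M : V → Finset (Sym2 V)) : Set (Sym2 V) :=
  {e | e ∈ G.edgeSet ∧ ∀ v ∈ e, e ∈ M v}

def highFree (G : SimpleGraph V) [DecidableRel G.Adj] (Δ : ℕ) (Mm : Finset (Sym2 V)) :
    Finset V :=
  {x | x ∉ verts Mm ∧ Δ ≤ G.degree x}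

def lowFree (G : SimpleGraph V) [DecidableRel G.Adj] (Δ : ℕ) (Mm : Finset (Sym2 V)) :
    Finset V :=
  {x | x ∉ verts Mm ∧ G.degree x < Δ}

def crossEdges (G : SimpleGraph V) [DecidableRel G.Adj] (M : V → Finset (Sym2 V)) (Δ : ℕ)
    (Mm : Finset (Sym2 V)) : Finset (Sym2 V) :=
  {e ∈ G.edgeFinset | (∀ v ∈ e, e ∈ M v) ∧
    ∃ x ∈ highFree G Δ Mm, ∃ u ∈ lowFree G Δ Mm, e = s(x, u)}

theorem disjoint_highFree_lowFree : Disjoint (highFree G Δ Mm) (lowFree G Δ Mm) :=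
  disjoint_filter.mpr fun _ _ hhigh hlow => hlow.2.not_ge hhigh.2

theorem exists_mem_highFree (hMlow : ∀ v, G.degree v < Δ → M v = G.incidenceFinset v)
    {e : Sym2 V} (he : e ∈ G.edgeSet) (hnot : e ∉ sparsifier G M)
    (hfree : ∀ v ∈ e, v ∉ verts Mm) : ∃ x ∈ highFree G Δ Mm, x ∈ e := by
  obtain ⟨x, hxe, hxM⟩ : ∃ x ∈ e, e ∉ M x := by
    by_contra! h
    exact hnot ⟨he, h⟩
  refine ⟨x, mem_filter.mpr ⟨mem_univ x, hfree x hxe, ?_⟩, hxe⟩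
  by_contra! hlow
  exact hxM (by rw [hMlow x hlow, mem_incidenceFinset]; exact ⟨he, hxe⟩)

theorem card_sdiff_le_add_card_highFree {η : ℝ}
    (hMlow : ∀ v, G.degree v < Δ → M v = G.incidenceFinset v)
    (hMm : IsMatchingIn (sparsifier G M) Mm)
    (hηmax : ∀ Mm' : Finset (Sym2 V), IsMatchingIn (sparsifier G M) Mm' → Mm ⊆ Mm' →
      (#(Mm' \ Mm) : ℝ) ≤ η * #Mm)
    {Mm' : Finset (Sym2 V)} (hMm' : IsMatchingIn G.edgeSet Mm') (hsub : Mm ⊆ Mm') :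
    (#(Mm' \ Mm) : ℝ) ≤ η * #Mm + #(highFree G Δ Mm) := by
  classical
  have hfree : ∀ e ∈ Mm' \ Mm, ∀ v ∈ e, v ∉ verts Mm :=
    fun e he v hv => hMm'.notMem_verts_of_mem_sdiff hsub he hv
  have hsubset (p : Sym2 V → Prop) [DecidablePred p] : (Mm' \ Mm).filter p ⊆ Mm' :=
    (filter_subset _ _).trans sdiff_subset
  have hin : (#((Mm' \ Mm).filter (· ∈ sparsifier G M)) : ℝ) ≤ η * #Mm :=
    hMm.card_le_of_disjoint_verts hηmax
      (hMm'.of_subset (hsubset _) fun e he => (mem_filter.mp he).2)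
      fun e he => hfree e (mem_filter.mp he).1
  have hmatch : IsMatchingIn G.edgeSet ((Mm' \ Mm).filter (· ∉ sparsifier G M)) :=
    hMm'.of_subset (hsubset _) ((coe_subset.mpr (hsubset _)).trans hMm'.1)
  have hout : (#((Mm' \ Mm).filter (· ∉ sparsifier G M)) : ℝ) ≤ #(highFree G Δ Mm) :=
    Nat.cast_le.mpr <| hmatch.card_le_card_of_forall_exists_mem fun e he =>
      exists_mem_highFree hMlow (hMm'.1 (hsubset _ he)) (mem_filter.mp he).2
        (hfree e (mem_filter.mp he).1)
  rw [← card_filter_add_card_filter_not (· ∈ sparsifier G M)]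
  push_cast
  linarith

theorem card_highFree_le (hN : N ⊆ crossEdges G M Δ Mm) :
    #(highFree G Δ Mm) ≤ #(highFree G Δ Mm \ verts N) + #N := by
  rw [← card_sdiff_add_card_inter (highFree G Δ Mm) (verts N)]
  gcongr
  refine card_inter_verts_le fun e he v hv w hw hve hwe => ?_
  obtain ⟨-, -, x, -, u, hu, rfl⟩ := mem_filter.mp (hN he)
  have hx : ∀ y ∈ highFree G Δ Mm, y ∈ s(x, u) → y = x := fun y hy hyxu =>
    (Sym2.mem_iff.mp hyxu).resolve_right
      (by rintro rfl; exact disjoint_left.mp disjoint_highFree_lowFree hy hu)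
  exact (hx v hv hve).trans (hx w hw hwe).symm

theorem IsMatchingIn.card_le_of_crossEdges {η : ℝ} (hMm : IsMatchingIn (sparsifier G M) Mm)
    (hηmax : ∀ Mm' : Finset (Sym2 V), IsMatchingIn (sparsifier G M) Mm' → Mm ⊆ Mm' →
      (#(Mm' \ Mm) : ℝ) ≤ η * #Mm)
    (hN : IsMatchingIn ↑(crossEdges G M Δ Mm) N) : (#N : ℝ) ≤ η * #Mm := by
  refine hMm.card_le_of_disjoint_verts hηmax (hN.of_subset subset_rfl fun e he => ?_)
    fun e he v hv => ?_
  · obtain ⟨heG, hmarked, -⟩ := mem_filter.mp (hN.1 he)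
    exact ⟨mem_edgeFinset.mp heG, hmarked⟩
  · obtain ⟨-, -, x, hx, u, hu, rfl⟩ := mem_filter.mp (hN.1 he)
    rcases Sym2.mem_iff.mp hv with rfl | rfl
    exacts [(mem_filter.mp hx).2.1, (mem_filter.mp hu).2.1]

theorem marks_subset_edgesWithin (hMinc : ∀ v, M v ⊆ G.incidenceFinset v)
    (hMlow : ∀ v, G.degree v < Δ → M v = G.incidenceFinset v)
    (hcover : ∀ e ∈ crossEdges G M Δ Mm, ∃ f ∈ N, ∃ v ∈ e, v ∈ f)
    {x : V} (hx : x ∈ highFree G Δ Mm \ verts N) :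
    M x ⊆ G.edgesWithin (highFree G Δ Mm \ verts N ∪ verts N ∪ verts Mm) := by
  intro e he
  obtain ⟨heG, hxe⟩ := (mem_incidenceFinset _ _ _).mp (hMinc x he)
  refine mem_filter.mpr ⟨mem_edgeFinset.mpr heG, fun v hv => ?_⟩
  obtain rfl | hvx := eq_or_ne v x
  · simp [(mem_sdiff.mp hx).1]
  have hexv : e = s(x, v) := (Sym2.mem_and_mem_iff hvx.symm).mp ⟨hxe, hv⟩
  by_cases hvMm : v ∈ verts Mm
  · simp [hvMm]
  by_cases hvΔ : Δ ≤ G.degree v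
  · have hvX : v ∈ highFree G Δ Mm := mem_filter.mpr ⟨mem_univ v, hvMm, hvΔ⟩
    by_cases hvN : v ∈ verts N <;> simp [hvN, hvX]
  push Not at hvΔ
  have hvlow : v ∈ lowFree G Δ Mm := mem_filter.mpr ⟨mem_univ v, hvMm, hvΔ⟩
  have hmarked : ∀ w ∈ e, e ∈ M w := by
    intro w hw
    rcases Sym2.mem_iff.mp (hexv ▸ hw) with rfl | rfl
    · exact he
    · rw [hMlow w hvΔ, mem_incidenceFinset]
      exact ⟨heG, hv⟩
  obtain ⟨f, hf, w, hwe, hwf⟩ := hcover e (mem_filter.mpr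
    ⟨mem_edgeFinset.mpr heG, hmarked, x, (mem_sdiff.mp hx).1, v, hvlow, hexv⟩)
  rcases Sym2.mem_iff.mp (hexv ▸ hwe) with rfl | rfl
  · exact absurd (mem_verts.mpr ⟨f, hf, hwf⟩) (mem_sdiff.mp hx).2
  · simp only [mem_union, mem_verts]
    exact Or.inl (Or.inr ⟨f, hf, hwf⟩)

theorem card_highFree_sdiff_verts_mul_le (hMinc : ∀ v, M v ⊆ G.incidenceFinset v)
    (hMlow : ∀ v, G.degree v < Δ → M v = G.incidenceFinset v)
    (hMhigh : ∀ v, Δ ≤ G.degree v → #(M v) = Δ)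
    {α : ℝ} (hα : 0 ≤ α) (hG : ∀ S, (#(G.edgesWithin S) : ℝ) ≤ α * #S)
    (hcover : ∀ e ∈ crossEdges G M Δ Mm, ∃ f ∈ N, ∃ v ∈ e, v ∈ f) :
    (#(highFree G Δ Mm \ verts N) : ℝ) * Δ ≤
      2 * α * (#(highFree G Δ Mm \ verts N) + 2 * #N + 2 * #Mm) := by
  set U := highFree G Δ Mm \ verts N
  set S := U ∪ verts N ∪ verts Mm
  have hcount : #U * Δ ≤ #(G.edgesWithin S) * 2 :=
    card_mul_le_card_mul_two_of_marks (fun x hx => marks_subset_edgesWithin hMinc hMlow hcover hx)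
      (fun x hx => (hMhigh x (mem_filter.mp (mem_sdiff.mp hx).1).2.2).ge)
      fun x _ e he => ((mem_incidenceFinset _ _ _).mp (hMinc x he)).2
  have hS : #S ≤ #U + 2 * #N + 2 * #Mm :=
    (card_union_le _ _).trans <| add_le_add
      ((card_union_le _ _).trans (add_le_add_right (card_verts_le N) _)) (card_verts_le Mm)
  calc (#U : ℝ) * Δ ≤ #(G.edgesWithin S) * 2 := by exact_mod_cast hcount
    _ ≤ α * #S * 2 := by gcongr; exact hG S
    _ ≤ 2 * α * (#U + 2 * #N + 2 * #Mm) := by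
      have hS' : (#S : ℝ) ≤ #U + 2 * #N + 2 * #Mm := by exact_mod_cast hS
      nlinarith

end Sparsifier

end

theorem le_mul_of_mul_le_of_threshold {α ε η Δ u n m : ℝ} (hα : 0 < α) (hε0 : 0 < ε)
    (hε1 : ε ≤ 1) (hη : 0 ≤ η) (hm : 0 ≤ m) (hu : 0 ≤ u)
    (hΔ : 5 * (5 / ε + 1) * (2 * α) ≤ Δ) (hn : n ≤ η * m)
    (h : u * Δ ≤ 2 * α * (u + 2 * n + 2 * m)) : u ≤ (ε + η) * m := by
  have hεΔ : 50 * α + 10 * α * ε ≤ ε * Δ := by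
    have := mul_le_mul_of_nonneg_left hΔ hε0.le
    field_simp at this
    linarith
  have h50 : α * (50 * u) ≤ α * (4 * ε * (η + 1) * m) := by
    nlinarith [mul_le_mul_of_nonneg_left h hε0.le, mul_le_mul_of_nonneg_left hεΔ hu,
      mul_le_mul_of_nonneg_left hn (by positivity : 0 ≤ 4 * α * ε),
      mul_nonneg (mul_nonneg hα.le hε0.le) hu]
  have := le_of_mul_le_mul_left h50 hα
  nlinarith [mul_le_mul_of_nonneg_right hε1 (mul_nonneg hη hm), mul_nonneg hε0.le hm,
    mul_nonneg hη hm]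

theorem stmt_15_general {V : Type*} [Fintype V] [DecidableEq V]
    (G : SimpleGraph V) [DecidableRel G.Adj]
    (α ε η : ℝ) (hα : 1 ≤ α) (hε0 : 0 < ε) (hε1 : ε ≤ 1) (hη : 0 < η)
    (Δ : ℕ) (hΔ : 5 * (5 / ε + 1) * (2 * α) ≤ (Δ : ℝ))
    -- arboricity at most α
    (harb : ∀ S : Finset V, 2 ≤ S.card →
      ((G.edgeFinset.filter fun e => ∀ v ∈ e, v ∈ S).card : ℝ) ≤ α * ((S.card : ℝ) - 1))
    -- each vertex marks up to Δ incident edges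
    (M : V → Finset (Sym2 V))
    (hMinc : ∀ v : V, M v ⊆ G.incidenceFinset v)
    (hMlow : ∀ v : V, G.degree v < Δ → M v = G.incidenceFinset v)
    (hMhigh : ∀ v : V, Δ ≤ G.degree v → (M v).card = Δ)
    -- Mm is an η-maximal matching of G_Δ
    (Mm : Finset (Sym2 V))
    (hMm : IsMatchingIn {e | e ∈ G.edgeSet ∧ ∀ v ∈ e, e ∈ M v} Mm)
    (hηmax : ∀ Mm' : Finset (Sym2 V),
      IsMatchingIn {e | e ∈ G.edgeSet ∧ ∀ v ∈ e, e ∈ M v} Mm' → Mm ⊆ Mm' →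
      ((Mm' \ Mm).card : ℝ) ≤ η * (Mm.card : ℝ)) :
    -- then Mm is an (ε + 3η)-maximal matching of G
    ∀ Mm' : Finset (Sym2 V), IsMatchingIn G.edgeSet Mm' → Mm ⊆ Mm' →
      ((Mm' \ Mm).card : ℝ) ≤ (ε + 3 * η) * (Mm.card : ℝ) := by
  intro Mm' hMm' hsub
  have hα0 : 0 ≤ α := by linarith
  obtain ⟨N, hN, hcover⟩ := IsMatchingIn.exists_maximal (crossEdges G M Δ Mm)
  have hNη : (#N : ℝ) ≤ η * #Mm := hMm.card_le_of_crossEdges hηmax hN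
  have hmarks := card_highFree_sdiff_verts_mul_le hMinc hMlow hMhigh hα0
    (G.card_edgesWithin_le hα0 harb) hcover
  have hU := le_mul_of_mul_le_of_threshold (by linarith) hε0 hε1 hη.le (by positivity)
    (by positivity) hΔ hNη hmarks
  have hX : (#(highFree G Δ Mm) : ℝ) ≤ #(highFree G Δ Mm \ verts N) + #N := by
    exact_mod_cast card_highFree_le (coe_subset.mp hN.1)
  have hF := card_sdiff_le_add_card_highFree hMlow hMm hηmax hMm' hsub
  linarith

theorem stmt_15 {V : Type*} [Fintype V] [DecidableEq V]
    (G : SimpleGraph V) [DecidableRel G.Adj]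
    (α ε η : ℝ) (hα : 1 ≤ α) (hε0 : 0 < ε) (hε1 : ε ≤ 1) (hη : 0 < η)
    (Δ : ℕ) (hΔ : 5 * (5 / ε + 1) * (2 * α) ≤ (Δ : ℝ))
    -- arboricity at most α
    (harb : ∀ S : Finset V, 2 ≤ S.card →
      ((G.edgeFinset.filter fun e => ∀ v ∈ e, v ∈ S).card : ℝ) ≤ α * ((S.card : ℝ) - 1))
    -- each vertex marks up to Δ incident edges
    (M : V → Finset (Sym2 V))
    (hMinc : ∀ v : V, M v ⊆ G.incidenceFinset v)
    (hMcard : ∀ v : V, (M v).card ≤ Δ)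
    (hMlow : ∀ v : V, G.degree v < Δ → M v = G.incidenceFinset v)
    (hMhigh : ∀ v : V, Δ ≤ G.degree v → (M v).card = Δ)
    -- Mm is an η-maximal matching of G_Δ
    (Mm : Finset (Sym2 V))
    (hMm : IsMatchingIn {e | e ∈ G.edgeSet ∧ ∀ v ∈ e, e ∈ M v} Mm)
    (hηmax : ∀ Mm' : Finset (Sym2 V),
      IsMatchingIn {e | e ∈ G.edgeSet ∧ ∀ v ∈ e, e ∈ M v} Mm' → Mm ⊆ Mm' →
      ((Mm' \ Mm).card : ℝ) ≤ η * (Mm.card : ℝ)) :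
    -- then Mm is an (ε + 3η)-maximal matching of G
    ∀ Mm' : Finset (Sym2 V), IsMatchingIn G.edgeSet Mm' → Mm ⊆ Mm' →
      ((Mm' \ Mm).card : ℝ) ≤ (ε + 3 * η) * (Mm.card : ℝ) :=
  stmt_15_general G α ε η hα hε0 hε1 hη Δ hΔ harb M hMinc hMlow hMhigh Mm hMm hηmax
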